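/- For positive integers p, l_1, l_2 and nonnegative integers m, n_1, n_2: z_p^m * z_{l_1} z_p^{n_1} z_{l_2} z_p^{n_2} = Σ_{0 ≤ i_1 ≤ i_2 ≤ m} (z_p^{i_1} z_{l_1} + z_p^{i_1-1} z_{p+l_1}) [ (z_p^{i_2-i_1} * z_p^{n_1}) z_{l_2} + (z_p^{i_2-i_1-1} * z_p^{n_1}) z_{p+l_2} ] (z_p^{m-i_2} * z_p^{n_2}), with the convention z_p^{-1} = 0. -/

import Mathlib

open MonoidAlgebra Finset

abbrev H : Type := MonoidAlgebra ℚ (FreeMonoid ℕ+)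

noncomputable def word (w : List ℕ+) : H := MonoidAlgebra.single (FreeMonoid.ofList w) 1

noncomputable def z (k : ℕ+) : H := word [k]

noncomputable def st : List ℕ+ → List ℕ+ → H
  | [], w => word w
  | k :: w1, [] => word (k :: w1)
  | k :: w1, l :: w2 =>
      z k * st w1 (l :: w2) + z l * st (k :: w1) w2 + z (k + l) * st w1 w2
termination_by a b => a.length + b.length
decreasing_by all_goals (simp; try omega)

/-! In `z_p^M * u z_l v` the letter `z_l` either stays alone or absorbs one `z_p`, and the `z_p`'s
to its left and right stuffle independently with `u` and `v`:
`z_p^M * u z_l v = ∑_j ((z_p^j * u) z_l + (z_p^(j-1) * u) z_(p+l)) (z_p^(M-j) * v)`,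
by induction on `M` and then on `u`. Splitting first at `z_l1` (with `u` empty), then at `z_l2`
(with `u = z_p^n1`), and reindexing `i2 = i1 + j` gives the formula. -/

theorem word_append (u v : List ℕ+) : word (u ++ v) = word u * word v := by
  rw [word, word, word, single_mul_single, one_mul]
  rfl

theorem word_nil : word [] = 1 := rfl

theorem word_cons (a : ℕ+) (w : List ℕ+) : word (a :: w) = z a * word w :=
  word_append [a] w

theorem st_nil_left (w : List ℕ+) : st [] w = word w := by
  rw [st]

theorem st_nil_right (w : List ℕ+) : st w [] = word w := by
  cases w <;> rw [st]

theorem st_cons_cons (k l : ℕ+) (w1 w2 : List ℕ+) :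
    st (k :: w1) (l :: w2) =
      z k * st w1 (l :: w2) + z l * st (k :: w1) w2 + z (k + l) * st w1 w2 := by
  rw [st]

/-- `(z_p^j * u) z_l + (z_p^(j-1) * u) z_(p+l)` with `z_p^(-1) = 0`: the terms of `z_p^j * u z_l`
whose last letter involves `z_l`. -/
noncomputable def stLast (p l : ℕ+) : ℕ → List ℕ+ → H
  | 0, u => st [] u * z l
  | j + 1, u => st (List.replicate (j + 1) p) u * z l + st (List.replicate j p) u * z (p + l)

theorem stLast_eq (p l : ℕ+) (j : ℕ) (u : List ℕ+) :
    stLast p l j u = st (List.replicate j p) u * z l +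
      if 1 ≤ j then st (List.replicate (j - 1) p) u * z (p + l) else 0 := by
  cases j <;> simp [stLast]

theorem stLast_succ_nil (p l : ℕ+) (j : ℕ) :
    stLast p l (j + 1) [] = z p * stLast p l j [] + if j = 0 then z (p + l) else 0 := by
  cases j <;> simp only [stLast, st_nil_right, List.replicate_succ, List.replicate_zero, word_cons,
    word_nil, if_true, if_false, Nat.succ_ne_zero] <;> noncomm_ring

theorem stLast_succ_cons (p l u0 : ℕ+) (u : List ℕ+) (j : ℕ) :
    stLast p l (j + 1) (u0 :: u) =
      z p * stLast p l j (u0 :: u) + z u0 * stLast p l (j + 1) u + z (p + u0) * stLast p l j u := by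
  cases j <;> simp only [stLast, List.replicate_succ, List.replicate_zero, st_cons_cons,
    st_nil_left, word_cons] <;> noncomm_ring

theorem st_replicate_append_cons (p l : ℕ+) (M : ℕ) (u v : List ℕ+) :
    st (List.replicate M p) (u ++ l :: v) =
      ∑ j ∈ range (M + 1), stLast p l j u * st (List.replicate (M - j) p) v := by
  induction M generalizing u with
  | zero => simp [stLast, st_nil_left, word_append, word_cons, mul_assoc]
  | succ M ihM =>
    induction u with
    | nil =>
      rw [List.nil_append, List.replicate_succ, st_cons_cons, ← List.nil_append (l :: v), ihM,
        sum_range_succ' _ (M + 1)]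
      simp only [stLast_succ_nil, Nat.add_sub_add_right, add_mul, sum_add_distrib, ite_mul,
        zero_mul, sum_ite_eq', mem_range, mul_sum, mul_assoc]
      simp only [Nat.zero_lt_succ, if_true, Nat.sub_zero, stLast, st_nil_left, word_nil, one_mul,
        List.replicate_succ]
      abel
    | cons u0 u ihu =>
      rw [List.cons_append, List.replicate_succ, st_cons_cons, ← List.cons_append, ihM,
        ← List.replicate_succ, ihu, ihM, sum_range_succ' _ (M + 1), sum_range_succ' _ (M + 1)]
      simp only [stLast_succ_cons, Nat.add_sub_add_right, add_mul, sum_add_distrib, mul_sum,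
        mul_add, mul_assoc]
      simp only [stLast, st_nil_left, word_cons, mul_assoc]
      abel

theorem sum_range_sum_range_sub_eq {M : Type*} [AddCommMonoid M] (m : ℕ) (f : ℕ → ℕ → M) :
    ∑ i ∈ range (m + 1), ∑ k ∈ range (m - i + 1), f i (i + k) =
      ∑ j ∈ range (m + 1), ∑ i ∈ range (j + 1), f i j := by
  calc _ = ∑ i ∈ range (m + 1), ∑ j ∈ Ico i (m + 1), f i j := by
        refine sum_congr rfl fun i hi => ?_
        rw [sum_Ico_eq_sum_range, Nat.sub_add_comm (Nat.lt_succ_iff.mp (mem_range.mp hi))]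
    _ = _ := by simpa only [range_eq_Ico] using sum_Ico_Ico_comm 0 (m + 1) f

theorem st_zero_twotwo (p l1 l2 : ℕ+) (m n1 n2 : ℕ) :
    st (List.replicate m p) (l1 :: (List.replicate n1 p ++ l2 :: List.replicate n2 p)) =
      ∑ i2 ∈ Finset.range (m + 1), ∑ i1 ∈ Finset.range (i2 + 1),
        (word (List.replicate i1 p) * z l1
            + if 1 ≤ i1 then word (List.replicate (i1 - 1) p) * z (p + l1) else 0)
        * (st (List.replicate (i2 - i1) p) (List.replicate n1 p) * z l2
            + if i1 < i2 then
                st (List.replicate (i2 - i1 - 1) p) (List.replicate n1 p) * z (p + l2)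
              else 0)
        * st (List.replicate (m - i2) p) (List.replicate n2 p) := by
  rw [← List.nil_append (l1 :: _), st_replicate_append_cons]
  simp only [st_replicate_append_cons, mul_sum, ← sum_range_sum_range_sub_eq]
  refine sum_congr rfl fun i1 _ => sum_congr rfl fun k _ => ?_
  rw [stLast_eq, stLast_eq, mul_assoc]
  simp only [st_nil_right, Nat.add_sub_cancel_left, Nat.sub_sub, Nat.lt_add_right_iff_pos,
    Nat.one_le_iff_ne_zero, Nat.pos_iff_ne_zero]
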